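/- arXiv:1107.5611 — 2 statements merged into one kernel-verified Lean document; each statement's English description precedes it below -/
import Mathlib

section
/- Let a ≥ 0, N ≥ 3 and 1 < p < (N+2+2a)/(N−2). Let u be a positive C² solution of −Δu = |x|^a u^p on ℝ^N that is stable outside a compact set and satisfies ∇u ∈ L²(ℝ^N) and |x|^a u^{p+1} ∈ L¹(ℝ^N). Then the energy identity ∫_{ℝ^N} |∇u|² = ∫_{ℝ^N} |x|^a u^{p+1} holds. -/
open MeasureTheory Real Metric

/-- The Laplacian of a function on Euclidean space, as the sum of its second
partial derivatives in the coordinate directions. -/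
noncomputable def lap {N : ℕ} (f : EuclideanSpace ℝ (Fin N) → ℝ)
    (x : EuclideanSpace ℝ (Fin N)) : ℝ :=
  ∑ i : Fin N,
    fderiv ℝ (fun y => fderiv ℝ f y (EuclideanSpace.single i 1)) x (EuclideanSpace.single i 1)

/-!
Test the equation against `ψ_R u`, where `ψ_R` is a cutoff equal to `1` on `B_R` and vanishing
outside `B_{2R}`: `∫ ψ_R |∇u|² + ∫ u ∇ψ_R·∇u = ∫ ψ_R |x|^a u^{p+1}`. As `R → ∞` the two outer
terms tend to the two sides of the identity by dominated convergence. The cross term lives on the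
annulus `R ≤ |x| ≤ 2R`, where `|∇ψ_R| ≤ C/R`, so it is bounded by `C ∫_annulus (|∇u|² + u²/R²)`.
The first part is a tail of an integrable function. For the second, Young's inequality
`u² ≤ R^θ |x|^a u^{p+1} + R^{-2(θ+a)/(p-1)}` on the annulus gives the bound
`R^{θ-2} ∫ |x|^a u^{p+1} + C R^{N-2-2(θ+a)/(p-1)}`, and subcriticality of `p` is exactly what
allows both exponents to be negative for some `θ < 2`.
-/

open Filter Topology

theorem sq_le_mul_rpow_add_rpow {p c v : ℝ} (hp : 1 < p) (hc : 0 < c) (hv : 0 ≤ v) :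
    v ^ 2 ≤ c * v ^ (p + 1) + c ^ (-2 / (p - 1)) := by
  have hp1 : 0 < p - 1 := sub_pos.2 hp
  rcases le_or_gt 1 (c * v ^ (p - 1)) with hbig | hsmall
  · have hsplit : v ^ (p + 1) = v ^ 2 * v ^ (p - 1) := by
      rw [← rpow_natCast, ← rpow_add' hv (by push_cast; linarith)]
      push_cast; ring_nf
    calc v ^ 2 ≤ v ^ 2 * (c * v ^ (p - 1)) := le_mul_of_one_le_right (by positivity) hbig
      _ = c * v ^ (p + 1) := by rw [hsplit]; ring
      _ ≤ _ := le_add_of_nonneg_right (by positivity)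
  · have hv' : v ^ (p - 1) ≤ c⁻¹ := by
      rw [← one_div, le_div_iff₀' hc]
      exact hsmall.le
    calc v ^ 2 = (v ^ (p - 1)) ^ (2 / (p - 1)) := by
          rw [← rpow_mul hv, mul_div_cancel₀ _ hp1.ne', rpow_two]
      _ ≤ c⁻¹ ^ (2 / (p - 1)) := by gcongr
      _ = c ^ (-2 / (p - 1)) := by rw [inv_rpow hc.le, ← rpow_neg hc.le, neg_div]
      _ ≤ _ := le_add_of_nonneg_left (by positivity)

theorem sq_div_le_rpow_mul_add_rpow {a p θ R s v : ℝ} (ha : 0 ≤ a) (hp : 1 < p) (hR : 0 < R)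
    (hRs : R ≤ s) (hv : 0 ≤ v) :
    (v / R) ^ 2 ≤ R ^ (θ - 2) * (s ^ a * v ^ (p + 1)) + R ^ (-2 - (θ + a) * (2 / (p - 1))) := by
  have hs : 0 < s := hR.trans_le hRs
  have hκ : 0 ≤ 2 / (p - 1) := div_nonneg zero_le_two (by linarith)
  have hweight : (R ^ θ * s ^ a) ^ (-2 / (p - 1)) ≤ R ^ (-(θ + a) * (2 / (p - 1))) :=
    calc (R ^ θ * s ^ a) ^ (-2 / (p - 1))
        = R ^ (θ * (-2 / (p - 1))) * s ^ (a * (-2 / (p - 1))) := by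
          rw [mul_rpow (by positivity) (by positivity), ← rpow_mul hR.le, ← rpow_mul hs.le]
      _ ≤ R ^ (θ * (-2 / (p - 1))) * R ^ (a * (-2 / (p - 1))) := by
          refine mul_le_mul_of_nonneg_left (rpow_le_rpow_of_nonpos hR hRs ?_) (by positivity)
          rw [neg_div]
          exact mul_nonpos_of_nonneg_of_nonpos ha (neg_nonpos.2 hκ)
      _ = R ^ (-(θ + a) * (2 / (p - 1))) := by
          rw [← rpow_add hR]
          ring_nf
  have hyoung :=
    sq_le_mul_rpow_add_rpow hp (mul_pos (rpow_pos_of_pos hR θ) (rpow_pos_of_pos hs a)) hv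
  have hR2 : (R ^ 2)⁻¹ = R ^ (-2 : ℝ) := by rw [rpow_neg hR.le, rpow_two]
  calc (v / R) ^ 2 = v ^ 2 * R ^ (-2 : ℝ) := by rw [div_pow, div_eq_mul_inv, hR2]
    _ ≤ (R ^ θ * s ^ a * v ^ (p + 1) + R ^ (-(θ + a) * (2 / (p - 1)))) * R ^ (-2 : ℝ) := by
        gcongr
        exact hyoung.trans (add_le_add_right hweight _)
    _ = R ^ (θ - 2) * (s ^ a * v ^ (p + 1)) + R ^ (-2 - (θ + a) * (2 / (p - 1))) := by
        rw [sub_eq_add_neg θ, rpow_add hR, sub_eq_add_neg (-2 : ℝ), rpow_add hR]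
        ring_nf

theorem tendsto_setIntegral_compl_ball {F : Type*} [NormedAddCommGroup F] [MeasurableSpace F]
    [OpensMeasurableSpace F] {μ : Measure F} {f : F → ℝ} (hf : Integrable f μ) :
    Tendsto (fun R => ∫ x in (ball (0 : F) R)ᶜ, f x ∂μ) atTop (𝓝 0) := by
  have hempty : ⋂ R : ℝ, (ball (0 : F) R)ᶜ = ∅ :=
    Set.eq_empty_iff_forall_notMem.2 fun x hx =>
      Set.mem_iInter.1 hx (‖x‖ + 1) (mem_ball_zero_iff.2 (lt_add_one _))
  simpa [hempty] using tendsto_setIntegral_of_antitone (μ := μ) (f := f)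
    (s := fun R => (ball (0 : F) R)ᶜ) (fun R => measurableSet_ball.compl)
    (fun _ _ h => Set.compl_subset_compl.2 (ball_subset_ball h)) ⟨0, hf.integrableOn⟩

theorem norm_inv_smul {F : Type*} [NormedAddCommGroup F] [NormedSpace ℝ F] {R : ℝ} (hR : 0 < R)
    (x : F) : ‖R⁻¹ • x‖ = ‖x‖ / R := by
  rw [norm_smul, norm_inv, Real.norm_of_nonneg hR.le, inv_mul_eq_div]

section Euclidean

variable {N : ℕ}

local notation "E" => EuclideanSpace ℝ (Fin N)

theorem norm_gradient_eq_norm_fderiv (f : E → ℝ) (x : E) : ‖gradient f x‖ = ‖fderiv ℝ f x‖ :=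
  LinearIsometryEquiv.norm_map _ _

theorem HasCompactSupport.gradient {f : E → ℝ} (hf : HasCompactSupport f) :
    HasCompactSupport (gradient f) :=
  hf.fderiv (𝕜 := ℝ) |>.comp_left (g := (InnerProductSpace.toDual ℝ E).symm) (map_zero _)

theorem ContDiff.continuous_gradient {f : E → ℝ} (hf : ContDiff ℝ 1 f) :
    Continuous (gradient f) :=
  (InnerProductSpace.toDual ℝ E).symm.continuous.comp (hf.continuous_fderiv one_ne_zero)

theorem inner_gradient_eq_sum (f g : E → ℝ) (x : E) :
    inner ℝ (gradient f x) (gradient g x) =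
      ∑ i, fderiv ℝ f x (EuclideanSpace.single i 1) * fderiv ℝ g x (EuclideanSpace.single i 1) := by
  simp only [← inner_gradient_left (𝕜 := ℝ), PiLp.inner_apply]
  simp [mul_comm]

theorem inner_gradient_mul_left {f g : E → ℝ} {x : E} (hf : DifferentiableAt ℝ f x)
    (hg : DifferentiableAt ℝ g x) (v : E) :
    inner ℝ (gradient (fun y => f y * g y) x) v =
      f x * inner ℝ (gradient g x) v + g x * inner ℝ (gradient f x) v := by
  simp only [inner_gradient_left, fderiv_fun_mul hf hg]
  simp

theorem integral_mul_lap {w u : E → ℝ} (hw : ContDiff ℝ 1 w) (hwc : HasCompactSupport w)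
    (hu : ContDiff ℝ 2 u) :
    ∫ x, w x * lap u x = -∫ x, inner ℝ (gradient w x) (gradient u x) := by
  set e : Fin N → E := fun i => EuclideanSpace.single i 1
  have hdu : ∀ i, ContDiff ℝ 1 fun x => fderiv ℝ u x (e i) :=
    fun i => (hu.fderiv_right le_rfl).clm_apply contDiff_const
  have hdw : Continuous (fderiv ℝ w) := hw.continuous_fderiv one_ne_zero
  have hint_w_ddu : ∀ i, Integrable fun x => w x * fderiv ℝ (fun y => fderiv ℝ u y (e i)) x (e i) :=
    fun i => (hw.continuous.mul (((hdu i).continuous_fderiv one_ne_zero).clm_apply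
      continuous_const)).integrable_of_hasCompactSupport hwc.mul_right
  have hint_dw_du : ∀ i, Integrable fun x => fderiv ℝ w x (e i) * fderiv ℝ u x (e i) :=
    fun i => ((hdw.clm_apply continuous_const).mul (hdu i).continuous)
      |>.integrable_of_hasCompactSupport (hwc.fderiv_apply (𝕜 := ℝ) (e i)).mul_right
  have hint_w_du : ∀ i, Integrable fun x => w x * fderiv ℝ u x (e i) :=
    fun i => (hw.continuous.mul (hdu i).continuous).integrable_of_hasCompactSupport hwc.mul_right
  calc ∫ x, w x * lap u x
      = ∑ i, ∫ x, w x * fderiv ℝ (fun y => fderiv ℝ u y (e i)) x (e i) := by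
        rw [← integral_finsetSum _ fun i _ => hint_w_ddu i]
        simp only [lap, Finset.mul_sum, e]
    _ = ∑ i, -∫ x, fderiv ℝ w x (e i) * fderiv ℝ u x (e i) := by
        refine Finset.sum_congr rfl fun i _ => ?_
        exact integral_mul_fderiv_eq_neg_fderiv_mul_of_integrable (hint_dw_du i) (hint_w_ddu i)
          (hint_w_du i) (fun x _ => hw.differentiable one_ne_zero x)
          (fun x _ => (hdu i).differentiable one_ne_zero x)
    _ = -∫ x, inner ℝ (gradient w x) (gradient u x) := by
        rw [Finset.sum_neg_distrib, ← integral_finsetSum _ fun i _ => hint_dw_du i]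
        simp only [inner_gradient_eq_sum, e]

theorem integral_mul_norm_sq_gradient_add_integral_inner {ψ u : E → ℝ} (hψ : ContDiff ℝ 1 ψ)
    (hψc : HasCompactSupport ψ) (hu : ContDiff ℝ 2 u) :
    (∫ x, ψ x * ‖gradient u x‖ ^ 2) + ∫ x, u x * inner ℝ (gradient ψ x) (gradient u x) =
      ∫ x, ψ x * u x * -lap u x := by
  have hu1 : ContDiff ℝ 1 u := hu.of_le one_le_two
  have hgu : Continuous (gradient u) := hu1.continuous_gradient
  have hint₁ : Integrable fun x => ψ x * ‖gradient u x‖ ^ 2 :=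
    (hψ.continuous.mul (hgu.norm.pow 2)).integrable_of_hasCompactSupport hψc.mul_right
  have hint₂ : Integrable fun x => u x * inner ℝ (gradient ψ x) (gradient u x) :=
    (hu1.continuous.mul (hψ.continuous_gradient.inner hgu)).integrable_of_hasCompactSupport
      (hψc.gradient.mono fun x hx h0 => hx (by rw [h0, inner_zero_left])).mul_left
  rw [← integral_add hint₁ hint₂]
  simp only [mul_neg, integral_neg, integral_mul_lap (hψ.mul hu1) (hψc.mul_right) hu, neg_neg]
  congr 1 with x
  rw [inner_gradient_mul_left (hψ.differentiable one_ne_zero x) (hu1.differentiable one_ne_zero x),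
    real_inner_self_eq_norm_sq]

noncomputable def unitBump : ContDiffBump (0 : E) := ⟨1, 2, one_pos, one_lt_two⟩

noncomputable def cutoff (R : ℝ) (x : E) : ℝ := unitBump (R⁻¹ • x)

theorem contDiff_cutoff (R : ℝ) {n : ℕ∞} : ContDiff ℝ n (cutoff (N := N) R) :=
  unitBump.contDiff.comp (contDiff_const_smul R⁻¹)

theorem cutoff_nonneg (R : ℝ) (x : E) : 0 ≤ cutoff R x := unitBump.nonneg

theorem cutoff_le_one (R : ℝ) (x : E) : cutoff R x ≤ 1 := unitBump.le_one

theorem cutoff_eq_one {R : ℝ} (hR : 0 < R) {x : E} (hx : ‖x‖ ≤ R) : cutoff R x = 1 :=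
  unitBump.one_of_mem_closedBall <| by
    rw [mem_closedBall_zero_iff, norm_inv_smul hR, div_le_iff₀ hR]
    simpa [unitBump] using hx

theorem cutoff_eq_zero {R : ℝ} (hR : 0 < R) {x : E} (hx : 2 * R ≤ ‖x‖) : cutoff R x = 0 :=
  unitBump.zero_of_le_dist <| by
    rw [dist_zero_right, norm_inv_smul hR, le_div_iff₀ hR]
    simpa [unitBump] using hx

theorem hasCompactSupport_cutoff {R : ℝ} (hR : 0 < R) : HasCompactSupport (cutoff (N := N) R) :=
  .intro (isCompact_closedBall 0 (2 * R)) fun _ hx =>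
    cutoff_eq_zero hR (not_le.1 (mt mem_closedBall_zero_iff.2 hx)).le

theorem gradient_cutoff_eq_zero {R : ℝ} (hR : 0 < R) {x : E}
    (hx : x ∉ closedBall (0 : E) (2 * R) \ ball 0 R) : gradient (cutoff R) x = 0 := by
  rcases not_and_or.1 hx with hout | hin
  · have : cutoff R =ᶠ[𝓝 x] fun _ => 0 := by
      filter_upwards [isClosed_closedBall.isOpen_compl.mem_nhds hout] with y hy
      exact cutoff_eq_zero hR (not_le.1 (mt mem_closedBall_zero_iff.2 hy)).le
    rw [this.gradient_eq, gradient_fun_const]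
  · have : cutoff R =ᶠ[𝓝 x] fun _ => 1 := by
      filter_upwards [isOpen_ball.mem_nhds (not_not.1 hin)] with y hy
      exact cutoff_eq_one hR (by simpa using (mem_ball_zero_iff.1 hy).le)
    rw [this.gradient_eq, gradient_fun_const]

theorem exists_norm_gradient_cutoff_le :
    ∃ C, 0 ≤ C ∧ ∀ R > 0, ∀ x : E, ‖gradient (cutoff R) x‖ ≤ C / R := by
  obtain ⟨C, hC⟩ := (unitBump (N := N).contDiff.continuous_fderiv one_ne_zero)
    |>.bounded_above_of_compact_support (unitBump.hasCompactSupport.fderiv (𝕜 := ℝ))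
  refine ⟨C, (norm_nonneg _).trans (hC 0), fun R hR x => ?_⟩
  have hcomp : HasFDerivAt (cutoff R) ((fderiv ℝ unitBump (R⁻¹ • x)).comp (R⁻¹ • .id ℝ E)) x :=
    (unitBump.contDiff.differentiable one_ne_zero _).hasFDerivAt.comp x
      ((hasFDerivAt_id x).const_smul R⁻¹)
  rw [norm_gradient_eq_norm_fderiv, hcomp.fderiv, ContinuousLinearMap.comp_smul, norm_smul,
    ContinuousLinearMap.comp_id, norm_inv, Real.norm_of_nonneg hR.le, inv_mul_eq_div]
  exact div_le_div_of_nonneg_right (hC _) hR.le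

theorem tendsto_integral_cutoff_mul {μ : Measure E} {f : E → ℝ} (hf : Integrable f μ) :
    Tendsto (fun R => ∫ x, cutoff R x * f x ∂μ) atTop (𝓝 (∫ x, f x ∂μ)) := by
  refine tendsto_integral_filter_of_dominated_convergence (fun x => ‖f x‖)
    (.of_forall fun R => (contDiff_cutoff R (n := 0)).continuous.aestronglyMeasurable.mul
      hf.aestronglyMeasurable)
    (.of_forall fun R => .of_forall fun x => ?_) hf.norm (.of_forall fun x => ?_)
  · rw [norm_mul, Real.norm_of_nonneg (cutoff_nonneg R x)]
    exact mul_le_of_le_one_left (norm_nonneg _) (cutoff_le_one R x)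
  · refine tendsto_const_nhds.congr' ?_
    filter_upwards [eventually_ge_atTop ‖x‖, eventually_gt_atTop 0] with R hxR hR
    rw [cutoff_eq_one hR hxR, one_mul]

theorem abs_integral_inner_gradient_cutoff_le {u : E → ℝ} (hu : Continuous u)
    (hgrad : Integrable fun x => ‖gradient u x‖ ^ 2) {C R : ℝ} (hR : 0 < R) (hC : 0 ≤ C)
    (hCR : ∀ x : E, ‖gradient (cutoff R) x‖ ≤ C / R) :
    |∫ x, u x * inner ℝ (gradient (cutoff R) x) (gradient u x)| ≤
      C / 2 * ((∫ x in closedBall 0 (2 * R) \ ball 0 R, ‖gradient u x‖ ^ 2) +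
        ∫ x in closedBall 0 (2 * R) \ ball 0 R, (u x / R) ^ 2) := by
  set A := closedBall (0 : E) (2 * R) \ ball 0 R
  have hint_sq : IntegrableOn (fun x => (u x / R) ^ 2) A :=
    ((hu.div_const R).pow 2).continuousOn.integrableOn_compact
      ((isCompact_closedBall _ _).diff isOpen_ball)
  rw [← integral_add hgrad.integrableOn hint_sq, ← integral_const_mul,
    ← setIntegral_eq_integral_of_forall_compl_eq_zero (s := A) fun x hx => by
      rw [gradient_cutoff_eq_zero hR hx, inner_zero_left, mul_zero], ← Real.norm_eq_abs]
  refine norm_integral_le_of_norm_le ((hgrad.integrableOn.add hint_sq).const_mul _)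
    (.of_forall fun x => ?_)
  set g := gradient u x
  calc ‖u x * inner ℝ (gradient (cutoff R) x) g‖ ≤ |u x| * (‖gradient (cutoff R) x‖ * ‖g‖) := by
        rw [Real.norm_eq_abs, abs_mul]
        gcongr
        exact abs_real_inner_le_norm _ _
    _ ≤ |u x| * (C / R * ‖g‖) := by gcongr; exact hCR x
    _ = C * (|u x| / R * ‖g‖) := by ring
    _ ≤ C * (((|u x| / R) ^ 2 + ‖g‖ ^ 2) / 2) := by
        gcongr
        nlinarith [sq_nonneg (|u x| / R - ‖g‖)]
    _ = C / 2 * (‖g‖ ^ 2 + (u x / R) ^ 2) := by rw [div_pow, sq_abs, div_pow]; ring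

theorem setIntegral_annulus_sq_div_le {a p R : ℝ} {u : E → ℝ} (θ : ℝ) (ha : 0 ≤ a) (hp : 1 < p)
    (hR : 0 < R) (hu : Continuous u) (hu0 : ∀ x, 0 ≤ u x)
    (hpot : Integrable fun x => ‖x‖ ^ a * u x ^ (p + 1)) :
    ∫ x in closedBall (0 : E) (2 * R) \ ball 0 R, (u x / R) ^ 2 ≤
      R ^ (θ - 2) * (∫ x, ‖x‖ ^ a * u x ^ (p + 1)) +
        R ^ (-2 - (θ + a) * (2 / (p - 1))) * volume.real (closedBall (0 : E) (2 * R)) := by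
  set A := closedBall (0 : E) (2 * R) \ ball 0 R
  have hAc : IsCompact A := (isCompact_closedBall _ _).diff isOpen_ball
  have hAm : MeasurableSet A := measurableSet_closedBall.diff measurableSet_ball
  have hint_const : IntegrableOn (fun _ => R ^ (-2 - (θ + a) * (2 / (p - 1)))) A :=
    integrableOn_const hAc.measure_lt_top.ne
  calc ∫ x in A, (u x / R) ^ 2
      ≤ ∫ x in A, (R ^ (θ - 2) * (‖x‖ ^ a * u x ^ (p + 1)) +
          R ^ (-2 - (θ + a) * (2 / (p - 1)))) :=
        setIntegral_mono_on (((hu.div_const R).pow 2).continuousOn.integrableOn_compact hAc)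
          ((hpot.integrableOn.const_mul _).add hint_const) hAm fun x hx =>
          sq_div_le_rpow_mul_add_rpow ha hp hR (by simpa using hx.2) (hu0 x)
    _ = R ^ (θ - 2) * (∫ x in A, ‖x‖ ^ a * u x ^ (p + 1)) +
          R ^ (-2 - (θ + a) * (2 / (p - 1))) * volume.real A := by
        rw [integral_add (hpot.integrableOn.const_mul _) hint_const, integral_const_mul,
          setIntegral_const, smul_eq_mul, mul_comm (volume.real A)]
    _ ≤ _ := by
        refine add_le_add (mul_le_mul_of_nonneg_left ?_ (by positivity))
          (mul_le_mul_of_nonneg_left ?_ (by positivity))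
        · exact setIntegral_le_integral hpot
            (.of_forall fun x => mul_nonneg (by positivity) (rpow_nonneg (hu0 x) _))
        · exact measureReal_mono Set.sdiff_subset measure_closedBall_lt_top.ne

theorem tendsto_setIntegral_annulus_sq_div {a p : ℝ} {u : E → ℝ} (ha : 0 ≤ a) (hp : 1 < p)
    (hsub : ((N : ℝ) - 2) * (p - 1) < 2 * a + 4) (hu : Continuous u) (hu0 : ∀ x, 0 ≤ u x)
    (hpot : Integrable fun x => ‖x‖ ^ a * u x ^ (p + 1)) :
    Tendsto (fun R => ∫ x in closedBall (0 : E) (2 * R) \ ball 0 R, (u x / R) ^ 2) atTop (𝓝 0) := by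
  -- Midpoint of the interval `((N - 2)(p - 1) - 2a) / 2 < θ < 2`, nonempty by `hsub`.
  set θ := (((N : ℝ) - 2) * (p - 1) - 2 * a + 4) / 4
  set γ := (N : ℝ) - 2 - (θ + a) * (2 / (p - 1))
  have hθ : θ - 2 < 0 := by simp only [θ]; linarith
  have hγ : γ < 0 := by
    have hp1 : 0 < p - 1 := sub_pos.2 hp
    have : (θ + a) * (2 / (p - 1)) = ((N : ℝ) - 2 + (2 * a + 4) / (p - 1)) / 2 := by
      field_simp; ring
    rw [show γ = ((N : ℝ) - 2 - (2 * a + 4) / (p - 1)) / 2 by simp only [γ, this]; ring]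
    have : (N : ℝ) - 2 < (2 * a + 4) / (p - 1) := by rwa [lt_div_iff₀ hp1]
    linarith
  set M := ∫ x, ‖x‖ ^ a * u x ^ (p + 1)
  set c := volume.real (ball (0 : E) 1)
  have hbound : ∀ R > 0, ∫ x in closedBall (0 : E) (2 * R) \ ball 0 R, (u x / R) ^ 2 ≤
      R ^ (θ - 2) * M + 2 ^ N * c * R ^ γ := by
    intro R hR
    refine (setIntegral_annulus_sq_div_le θ ha hp hR hu hu0 hpot).trans_eq ?_
    rw [Measure.addHaar_real_closedBall _ _ (by positivity), finrank_euclideanSpace_fin, mul_pow,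
      ← rpow_natCast R N, mul_comm (2 ^ N : ℝ), mul_assoc, mul_assoc, ← mul_assoc (R ^ _),
      ← rpow_add hR, show -2 - (θ + a) * (2 / (p - 1)) + N = γ by ring]
    ring
  have hlim : Tendsto (fun R : ℝ => R ^ (θ - 2) * M + 2 ^ N * c * R ^ γ) atTop (𝓝 0) := by
    have h₁ := tendsto_rpow_neg_atTop (neg_pos.2 hθ)
    have h₂ := tendsto_rpow_neg_atTop (neg_pos.2 hγ)
    simp only [neg_neg] at h₁ h₂
    simpa using (h₁.mul_const M).add (h₂.const_mul (2 ^ N * c))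
  refine squeeze_zero' (.of_forall fun R => setIntegral_nonneg ?_ fun x _ => sq_nonneg _) ?_ hlim
  · exact measurableSet_closedBall.diff measurableSet_ball
  · filter_upwards [eventually_gt_atTop 0] using hbound

theorem tendsto_integral_inner_gradient_cutoff {a p : ℝ} {u : E → ℝ} (ha : 0 ≤ a) (hp : 1 < p)
    (hsub : ((N : ℝ) - 2) * (p - 1) < 2 * a + 4) (hu : Continuous u) (hu0 : ∀ x, 0 ≤ u x)
    (hgrad : Integrable fun x => ‖gradient u x‖ ^ 2)
    (hpot : Integrable fun x => ‖x‖ ^ a * u x ^ (p + 1)) :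
    Tendsto (fun R => ∫ x, u x * inner ℝ (gradient (cutoff R) x) (gradient u x)) atTop (𝓝 0) := by
  obtain ⟨C, hC0, hC⟩ := exists_norm_gradient_cutoff_le (N := N)
  have hgrad_annulus : Tendsto (fun R => ∫ x in closedBall (0 : E) (2 * R) \ ball 0 R,
      ‖gradient u x‖ ^ 2) atTop (𝓝 0) := by
    refine squeeze_zero (fun R => setIntegral_nonneg
      (measurableSet_closedBall.diff measurableSet_ball) fun x _ => sq_nonneg _) (fun R => ?_)
      (tendsto_setIntegral_compl_ball hgrad)
    exact setIntegral_mono_set hgrad.integrableOn (.of_forall fun x => sq_nonneg _)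
      (.of_forall fun x hx => hx.2)
  have hlim := (hgrad_annulus.add
    (tendsto_setIntegral_annulus_sq_div ha hp hsub hu hu0 hpot)).const_mul (C / 2)
  rw [add_zero, mul_zero] at hlim
  rw [tendsto_zero_iff_abs_tendsto_zero]
  refine squeeze_zero' (.of_forall fun R => abs_nonneg _) ?_ hlim
  filter_upwards [eventually_gt_atTop 0] with R hR
  exact abs_integral_inner_gradient_cutoff_le hu hgrad hR hC0 (hC R hR)

end Euclidean

theorem henon_energy_identity_general
    (N : ℕ) (hN : 3 ≤ N) (a p : ℝ) (ha : 0 ≤ a) (hp : 1 < p)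
    (hsub : p < ((N : ℝ) + 2 + 2 * a) / ((N : ℝ) - 2))
    (u : EuclideanSpace ℝ (Fin N) → ℝ)
    (hu : ContDiff ℝ 2 u) (hupos : ∀ x, 0 < u x)
    (hequ : ∀ x, -lap u x = ‖x‖ ^ a * u x ^ p)
    (hgrad : Integrable (fun x => ‖gradient u x‖ ^ 2)
      (volume : Measure (EuclideanSpace ℝ (Fin N))))
    (hpot : Integrable (fun x => ‖x‖ ^ a * u x ^ (p + 1))
      (volume : Measure (EuclideanSpace ℝ (Fin N)))) :
    ∫ x, ‖gradient u x‖ ^ 2 = ∫ x, ‖x‖ ^ a * u x ^ (p + 1) := by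
  have hsub' : ((N : ℝ) - 2) * (p - 1) < 2 * a + 4 := by
    have hN2 : (0 : ℝ) < N - 2 := by
      have : (3 : ℝ) ≤ N := by exact_mod_cast hN
      linarith
    rw [lt_div_iff₀ hN2] at hsub
    linarith
  have henergy : ∀ᶠ R in atTop,
      (∫ x, cutoff R x * ‖gradient u x‖ ^ 2) +
        ∫ x, u x * inner ℝ (gradient (cutoff R) x) (gradient u x) =
      ∫ x, cutoff R x * (‖x‖ ^ a * u x ^ (p + 1)) := by
    filter_upwards [eventually_gt_atTop 0] with R hR
    rw [integral_mul_norm_sq_gradient_add_integral_inner (contDiff_cutoff R)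
      (hasCompactSupport_cutoff hR) hu]
    congr 1 with x
    rw [hequ, rpow_add_one (hupos x).ne']
    ring
  have hlim := (tendsto_integral_cutoff_mul hgrad).add
    (tendsto_integral_inner_gradient_cutoff ha hp hsub' hu.continuous (fun x => (hupos x).le)
      hgrad hpot)
  rw [add_zero] at hlim
  exact tendsto_nhds_unique (hlim.congr' henergy) (tendsto_integral_cutoff_mul hpot)

/-- **Energy identity for solutions of the Hénon equation stable outside a compact set.**
Let `a ≥ 0`, `N ≥ 3`, `1 < p < (N+2+2a)/(N-2)`, and let `u` be a positive `C²` solution of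
`-Δu = |x|^a u^p` on `ℝ^N` which is stable outside a compact set and satisfies
`∇u ∈ L²(ℝ^N)` and `|x|^a u^(p+1) ∈ L¹(ℝ^N)`.  Then `∫ |∇u|² = ∫ |x|^a u^(p+1)`. -/
theorem henon_energy_identity
    (N : ℕ) (hN : 3 ≤ N) (a p : ℝ) (ha : 0 ≤ a) (hp : 1 < p)
    (hsub : p < ((N : ℝ) + 2 + 2 * a) / ((N : ℝ) - 2))
    (u : EuclideanSpace ℝ (Fin N) → ℝ)
    (hu : ContDiff ℝ 2 u) (hupos : ∀ x, 0 < u x)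
    (hequ : ∀ x, -lap u x = ‖x‖ ^ a * u x ^ p)
    (K : Set (EuclideanSpace ℝ (Fin N))) (hK : IsCompact K)
    (hstable : ∀ φ : EuclideanSpace ℝ (Fin N) → ℝ,
      ContDiff ℝ 1 φ → HasCompactSupport φ → Disjoint (tsupport φ) K →
      0 ≤ (∫ x, ‖gradient φ x‖ ^ 2) - p * ∫ x, ‖x‖ ^ a * u x ^ (p - 1) * φ x ^ 2)
    (hgrad : Integrable (fun x => ‖gradient u x‖ ^ 2)
      (volume : Measure (EuclideanSpace ℝ (Fin N))))
    (hpot : Integrable (fun x => ‖x‖ ^ a * u x ^ (p + 1))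
      (volume : Measure (EuclideanSpace ℝ (Fin N)))) :
    ∫ x, ‖gradient u x‖ ^ 2 = ∫ x, ‖x‖ ^ a * u x ^ (p + 1) :=
  henon_energy_identity_general N hN a p ha hp hsub u hu hupos hequ hgrad hpot
end

section
/- Let p, q, a, b ≥ 0 with pq > 1, Ω ⊆ ℝ^N open, and let (u, v) be a positive pointwise stable solution of the Hénon–Lane–Emden system −Δu = |x|^a v^p, −Δv = |x|^b u^q in Ω. Then for every test function φ ∈ C_c¹(Ω) the stability inequality holds: √(pq) ∫_Ω |x|^{(a+b)/2} v^{(p−1)/2} u^{(q−1)/2} φ² ≤ ∫_Ω |∇φ|². -/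
/-!
Picone's identity: for `w > 0`,
`|∇φ|² - div (φ² ∇w / w) = (-Δw / w) φ² + |∇φ - φ ∇w / w|²`,
and the divergence term integrates to zero against a compactly supported `φ`, so
`∫ (-Δw / w) φ² ≤ ∫ |∇φ|²`. Applied to the positive solutions `ζ, η` of the linearized system,
the two weights `-Δζ / ζ = p |x|^a v^(p-1) η / ζ` and `-Δη / η = q |x|^b u^(q-1) ζ / η` have
product `pq |x|^(a+b) v^(p-1) u^(q-1)`, independent of `η / ζ`; averaging the two inequalities
and using AM-GM gives the claim.
-/

open MeasureTheory Real Metric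

theorem HasCompactSupport.integrable_mul_of_continuousOn {X : Type*} [TopologicalSpace X]
    [T2Space X] [MeasurableSpace X] [OpensMeasurableSpace X] {μ : Measure X}
    [IsFiniteMeasureOnCompacts μ] {Ω : Set X} {f g : X → ℝ} (hf : Continuous f)
    (hfs : HasCompactSupport f) (hfΩ : tsupport f ⊆ Ω) (hg : ContinuousOn g Ω) :
    Integrable (fun x => f x * g x) μ :=
  (integrableOn_iff_integrable_of_support_subset
      ((Function.support_mul_subset_left f g).trans (subset_tsupport f))).mp
    ((hf.continuousOn.mul hg).mono hfΩ |>.integrableOn_compact hfs)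

theorem fderiv_div_apply {E : Type*} [NormedAddCommGroup E] [NormedSpace ℝ E] {f g : E → ℝ}
    {x : E} (hf : DifferentiableAt ℝ f x) (hg : DifferentiableAt ℝ g x) (hx : g x ≠ 0) (v : E) :
    fderiv ℝ (fun y => f y / g y) x v =
      (fderiv ℝ f x v * g x - f x * fderiv ℝ g x v) / g x ^ 2 := by
  have h : HasFDerivAt (fun y => f y * (g y)⁻¹) _ x :=
    hf.hasFDerivAt.mul ((hasFDerivAt_inv hx).comp x hg.hasFDerivAt)
  simp only [div_eq_mul_inv]
  rw [h.fderiv]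
  simp only [add_apply, smul_apply, ContinuousLinearMap.comp_apply,
    ContinuousLinearMap.toSpanSingleton_apply, smul_eq_mul]
  field_simp
  ring

section IntegrationByParts

variable {E : Type*} [NormedAddCommGroup E] [NormedSpace ℝ E] [MeasurableSpace E] [BorelSpace E]
  {μ : Measure E} {Ω : Set E} {f g : E → ℝ}

theorem HasCompactSupport.integrable_mul_fderiv_apply [IsFiniteMeasureOnCompacts μ]
    (hΩ : IsOpen Ω) (hf : Continuous f) (hfs : HasCompactSupport f) (hfΩ : tsupport f ⊆ Ω)
    (hg : ContDiffOn ℝ 1 g Ω) (v : E) : Integrable (fun x => f x * fderiv ℝ g x v) μ :=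
  hfs.integrable_mul_of_continuousOn hf hfΩ
    ((hg.continuousOn_fderiv_of_isOpen hΩ le_rfl).clm_apply continuousOn_const)

theorem HasCompactSupport.integrable_fderiv_apply_mul [IsFiniteMeasureOnCompacts μ]
    (hf : ContDiff ℝ 1 f) (hfs : HasCompactSupport f) (hfΩ : tsupport f ⊆ Ω)
    (hg : ContinuousOn g Ω) (v : E) : Integrable (fun x => fderiv ℝ f x v * g x) μ :=
  (hfs.fderiv_apply ℝ v).integrable_mul_of_continuousOn
    ((hf.continuous_fderiv one_ne_zero).clm_apply continuous_const)
    ((tsupport_fderiv_apply_subset ℝ v).trans hfΩ) hg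

theorem integral_mul_fderiv_add_fderiv_mul_eq_zero [FiniteDimensional ℝ E] [μ.IsAddHaarMeasure]
    (hΩ : IsOpen Ω) (hf : ContDiff ℝ 1 f) (hfs : HasCompactSupport f) (hfΩ : tsupport f ⊆ Ω)
    (hg : ContDiffOn ℝ 1 g Ω) (v : E) :
    ∫ x in Ω, (f x * fderiv ℝ g x v + fderiv ℝ f x v * g x) ∂μ = 0 := by
  have hfg' := hfs.integrable_mul_fderiv_apply (μ := μ) hΩ hf.continuous hfΩ hg v
  have hf'g := hfs.integrable_fderiv_apply_mul (μ := μ) hf hfΩ hg.continuousOn v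
  rw [setIntegral_eq_integral_of_forall_compl_eq_zero, integral_add hfg' hf'g,
    integral_mul_fderiv_eq_neg_fderiv_mul_of_integrable hf'g hfg'
      (hfs.integrable_mul_of_continuousOn hf.continuous hfΩ hg.continuousOn)
      (fun x _ => hf.differentiable one_ne_zero x)
      (fun x hx => (hg.differentiableOn one_ne_zero).differentiableAt (hΩ.mem_nhds (hfΩ hx))),
    neg_add_cancel]
  intro x hx
  have hx' : x ∉ tsupport f := mt (@hfΩ x) hx
  have hx'' : x ∉ tsupport (fderiv ℝ f · v) := fun h => hx' (tsupport_fderiv_apply_subset ℝ v h)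
  rw [image_eq_zero_of_notMem_tsupport hx', image_eq_zero_of_notMem_tsupport hx'']
  ring

end IntegrationByParts

section Euclidean

variable {N : ℕ}

local notation "E" => EuclideanSpace ℝ (Fin N)

noncomputable def partialDeriv (i : Fin N) (f : E → ℝ) (x : E) : ℝ :=
  fderiv ℝ f x (EuclideanSpace.single i 1)

theorem lap_eq_sum_partialDeriv (f : E → ℝ) (x : E) :
    lap f x = ∑ i, partialDeriv i (partialDeriv i f) x :=
  rfl

theorem norm_gradient_sq_eq_sum (f : E → ℝ) (x : E) :
    ‖gradient f x‖ ^ 2 = ∑ i, partialDeriv i f x ^ 2 := by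
  have hcoord (i : Fin N) : gradient f x i = partialDeriv i f x := by
    rw [partialDeriv, ← toDual_gradient, InnerProductSpace.toDual_apply_apply,
      EuclideanSpace.inner_single_right]
    simp
  rw [EuclideanSpace.norm_eq, Real.sq_sqrt (by positivity)]
  simp [hcoord]

theorem ContDiffOn.partialDeriv_of_isOpen {m n : WithTop ℕ∞} {f : E → ℝ} {Ω : Set E}
    (hf : ContDiffOn ℝ n f Ω) (hΩ : IsOpen Ω) (hmn : m + 1 ≤ n) (i : Fin N) :
    ContDiffOn ℝ m (partialDeriv i f) Ω :=
  (hf.fderiv_of_isOpen hΩ hmn).clm_apply contDiffOn_const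

theorem ContDiffOn.continuousOn_partialDeriv {n : WithTop ℕ∞} {f : E → ℝ} {Ω : Set E}
    (hf : ContDiffOn ℝ n f Ω) (hΩ : IsOpen Ω) (hn : 1 ≤ n) (i : Fin N) :
    ContinuousOn (partialDeriv i f) Ω :=
  (hf.continuousOn_fderiv_of_isOpen hΩ hn).clm_apply continuousOn_const

theorem ContDiffOn.continuousOn_lap {f : E → ℝ} {Ω : Set E} (hf : ContDiffOn ℝ 2 f Ω)
    (hΩ : IsOpen Ω) : ContinuousOn (lap f) Ω := by
  simp only [funext (lap_eq_sum_partialDeriv f)]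
  exact continuousOn_finsetSum _ fun i _ =>
    (hf.partialDeriv_of_isOpen hΩ (by norm_num) i).continuousOn_partialDeriv hΩ le_rfl i

theorem neg_lap_div_mul_sq_le {w φ : E → ℝ} {x : E} (hw : DifferentiableAt ℝ w x)
    (hw' : ∀ i, DifferentiableAt ℝ (partialDeriv i w) x) (hwx : 0 < w x)
    (hφ : DifferentiableAt ℝ φ x) :
    -lap w x / w x * φ x ^ 2 ≤ ∑ i, (partialDeriv i φ x ^ 2 -
      (φ x ^ 2 * partialDeriv i (fun y => partialDeriv i w y / w y) x +
        partialDeriv i (fun y => φ y ^ 2) x * (partialDeriv i w x / w x))) := by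
  rw [lap_eq_sum_partialDeriv, neg_div, Finset.sum_div, ← Finset.sum_neg_distrib, Finset.sum_mul]
  refine Finset.sum_le_sum fun i _ => ?_
  have hquot : partialDeriv i (fun y => partialDeriv i w y / w y) x =
      (partialDeriv i (partialDeriv i w) x * w x - partialDeriv i w x * partialDeriv i w x) /
        w x ^ 2 :=
    fderiv_div_apply (hw' i) hw hwx.ne' _
  have hsq : partialDeriv i (fun y => φ y ^ 2) x = 2 * φ x * partialDeriv i φ x := by
    simp [partialDeriv, fderiv_fun_pow 2 hφ]
  -- the difference of the two sides is `(∂ᵢφ - φ ∂ᵢw / w)²`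
  rw [hquot, hsq, ← sub_nonneg]
  convert sq_nonneg (partialDeriv i φ x - φ x * partialDeriv i w x / w x) using 1
  field_simp
  ring

theorem integrable_partialDeriv_sq {φ : E → ℝ} (hφ : ContDiff ℝ 1 φ) (hφs : HasCompactSupport φ)
    (i : Fin N) : Integrable fun x => partialDeriv i φ x ^ 2 := by
  have hdφ : Continuous (partialDeriv i φ) :=
    (hφ.continuous_fderiv one_ne_zero).clm_apply continuous_const
  have h : Integrable fun x => partialDeriv i φ x * partialDeriv i φ x :=
    hφs.integrable_fderiv_apply_mul hφ (Set.subset_univ _) hdφ.continuousOn _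
  simpa only [sq] using h

theorem integrable_neg_lap_div_mul_sq {Ω : Set E} {w φ : E → ℝ} (hΩ : IsOpen Ω)
    (hw : ContDiffOn ℝ 2 w Ω) (hwpos : ∀ x ∈ Ω, 0 < w x) (hφ : Continuous φ)
    (hφs : HasCompactSupport φ) (hφΩ : tsupport φ ⊆ Ω) :
    Integrable fun x => -lap w x / w x * φ x ^ 2 := by
  have h := (hφs.comp_left (g := fun t : ℝ => t ^ 2) (by norm_num)).integrable_mul_of_continuousOn
    (μ := volume) (f := fun x => φ x ^ 2) (g := fun x => -lap w x / w x) (hφ.pow 2)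
    ((tsupport_comp_subset (g := fun t : ℝ => t ^ 2) (by norm_num) φ).trans hφΩ)
    ((hw.continuousOn_lap hΩ).neg.div hw.continuousOn fun x hx => (hwpos x hx).ne')
  simpa only [mul_comm] using h

theorem integral_neg_lap_div_mul_sq_le {Ω : Set E} {w φ : E → ℝ} (hΩ : IsOpen Ω)
    (hw : ContDiffOn ℝ 2 w Ω) (hwpos : ∀ x ∈ Ω, 0 < w x) (hφ : ContDiff ℝ 1 φ)
    (hφs : HasCompactSupport φ) (hφΩ : tsupport φ ⊆ Ω) :
    ∫ x in Ω, -lap w x / w x * φ x ^ 2 ≤ ∫ x in Ω, ‖gradient φ x‖ ^ 2 := by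
  set ψ : E → ℝ := fun x => φ x ^ 2
  set g : Fin N → E → ℝ := fun i y => partialDeriv i w y / w y
  -- `R i` is the `i`-th summand of `div (φ² ∇w / w)`
  set R : Fin N → E → ℝ := fun i x => ψ x * partialDeriv i (g i) x + partialDeriv i ψ x * g i x
  have hψ : ContDiff ℝ 1 ψ := hφ.pow 2
  have hψs : HasCompactSupport ψ := hφs.comp_left (g := fun t : ℝ => t ^ 2) (by norm_num)
  have hψΩ : tsupport ψ ⊆ Ω :=
    (tsupport_comp_subset (g := fun t : ℝ => t ^ 2) (by norm_num) φ).trans hφΩ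
  have hw' (i : Fin N) : ContDiffOn ℝ 1 (partialDeriv i w) Ω :=
    hw.partialDeriv_of_isOpen hΩ (by norm_num) i
  have hg (i : Fin N) : ContDiffOn ℝ 1 (g i) Ω :=
    (hw' i).div (hw.of_le one_le_two) fun x hx => (hwpos x hx).ne'
  have hR (i : Fin N) : ∫ x in Ω, R i x = 0 :=
    integral_mul_fderiv_add_fderiv_mul_eq_zero hΩ hψ hψs hψΩ (hg i) _
  have hRint (i : Fin N) : Integrable fun x => R i x :=
    (hψs.integrable_mul_fderiv_apply hΩ hψ.continuous hψΩ (hg i) _).add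
      (hψs.integrable_fderiv_apply_mul hψ hψΩ (hg i).continuousOn _)
  have hdφint := integrable_partialDeriv_sq hφ hφs
  have hpointwise : ∀ x ∈ Ω, -lap w x / w x * φ x ^ 2 ≤ ∑ i, (partialDeriv i φ x ^ 2 - R i x) :=
    fun x hx => neg_lap_div_mul_sq_le
      ((hw.differentiableOn two_ne_zero x hx).differentiableAt (hΩ.mem_nhds hx))
      (fun i => ((hw' i).differentiableOn one_ne_zero x hx).differentiableAt (hΩ.mem_nhds hx))
      (hwpos x hx) (hφ.differentiable one_ne_zero x)
  calc ∫ x in Ω, -lap w x / w x * φ x ^ 2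
      ≤ ∫ x in Ω, ∑ i, (partialDeriv i φ x ^ 2 - R i x) :=
        setIntegral_mono_on
          (integrable_neg_lap_div_mul_sq hΩ hw hwpos hφ.continuous hφs hφΩ).integrableOn
          (integrable_finsetSum _ fun i _ => (hdφint i).sub (hRint i)).integrableOn
          hΩ.measurableSet hpointwise
    _ = ∑ i, ∫ x in Ω, partialDeriv i φ x ^ 2 := by
        rw [integral_finsetSum (f := fun i x => partialDeriv i φ x ^ 2 - R i x) _
          fun i _ => ((hdφint i).sub (hRint i)).restrict]
        refine Finset.sum_congr rfl fun i _ => ?_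
        rw [integral_sub (hdφint i).integrableOn (hRint i).integrableOn, hR i, sub_zero]
    _ = ∫ x in Ω, ‖gradient φ x‖ ^ 2 := by
        simp only [norm_gradient_sq_eq_sum]
        rw [integral_finsetSum _ fun i _ => (hdφint i).integrableOn]

end Euclidean

theorem sqrt_mul_mul_rpow_le_half_add {p q a b r s t ζ η : ℝ} (hp : 0 ≤ p) (hq : 0 ≤ q)
    (ha : 0 ≤ a) (hb : 0 ≤ b) (hr : 0 ≤ r) (hs : 0 ≤ s) (ht : 0 ≤ t) (hζ : 0 < ζ) (hη : 0 < η) :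
    √(p * q) * (r ^ ((a + b) / 2) * s ^ ((p - 1) / 2) * t ^ ((q - 1) / 2)) ≤
      (p * (r ^ a * s ^ (p - 1)) * η / ζ + q * (r ^ b * t ^ (q - 1)) * ζ / η) / 2 := by
  have rpow_half_sq {x : ℝ} (hx : 0 ≤ x) (c : ℝ) : (x ^ (c / 2)) ^ 2 = x ^ c := by
    rw [← rpow_natCast, ← rpow_mul hx]
    norm_num
  set α := √p * r ^ (a / 2) * s ^ ((p - 1) / 2)
  set β := √q * r ^ (b / 2) * t ^ ((q - 1) / 2)
  have hα : α ^ 2 = p * (r ^ a * s ^ (p - 1)) := by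
    rw [mul_pow, mul_pow, sq_sqrt hp, rpow_half_sq hr, rpow_half_sq hs, mul_assoc]
  have hβ : β ^ 2 = q * (r ^ b * t ^ (q - 1)) := by
    rw [mul_pow, mul_pow, sq_sqrt hq, rpow_half_sq hr, rpow_half_sq ht, mul_assoc]
  have hαβ : √(p * q) * (r ^ ((a + b) / 2) * s ^ ((p - 1) / 2) * t ^ ((q - 1) / 2)) = α * β := by
    rw [sqrt_mul hp, add_div, rpow_add_of_nonneg hr (by positivity) (by positivity)]
    ring
  have hgap : (α ^ 2 * η / ζ + β ^ 2 * ζ / η) / 2 - α * β = (α * η - β * ζ) ^ 2 / (2 * ζ * η) := by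
    field_simp
    ring
  rw [hαβ, ← hα, ← hβ, ← sub_nonneg, hgap]
  positivity

theorem henon_lane_emden_stability_inequality_general
    (N : ℕ) (p q a b : ℝ) (hp : 0 ≤ p) (hq : 0 ≤ q) (ha : 0 ≤ a) (hb : 0 ≤ b)
    (Ω : Set (EuclideanSpace ℝ (Fin N))) (hΩ : IsOpen Ω)
    (u v : EuclideanSpace ℝ (Fin N) → ℝ)
    (hupos : ∀ x ∈ Ω, 0 < u x) (hvpos : ∀ x ∈ Ω, 0 < v x)
    (ζ η : EuclideanSpace ℝ (Fin N) → ℝ)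
    (hζ : ContDiffOn ℝ (⊤ : ℕ∞) ζ Ω) (hη : ContDiffOn ℝ (⊤ : ℕ∞) η Ω)
    (hζpos : ∀ x ∈ Ω, 0 < ζ x) (hηpos : ∀ x ∈ Ω, 0 < η x)
    (heqζ : ∀ x ∈ Ω, -lap ζ x = p * (‖x‖ ^ a * v x ^ (p - 1)) * η x)
    (heqη : ∀ x ∈ Ω, -lap η x = q * (‖x‖ ^ b * u x ^ (q - 1)) * ζ x) :
    ∀ φ : EuclideanSpace ℝ (Fin N) → ℝ,
      ContDiff ℝ 1 φ → HasCompactSupport φ → tsupport φ ⊆ Ω →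
      Real.sqrt (p * q) *
          (∫ x in Ω, ‖x‖ ^ ((a + b) / 2) * v x ^ ((p - 1) / 2) * u x ^ ((q - 1) / 2) *
            φ x ^ 2) ≤
        ∫ x in Ω, ‖gradient φ x‖ ^ 2 := by
  intro φ hφ hφs hφΩ
  have hζ2 : ContDiffOn ℝ 2 ζ Ω := hζ.of_le (WithTop.coe_le_coe.mpr le_top)
  have hη2 : ContDiffOn ℝ 2 η Ω := hη.of_le (WithTop.coe_le_coe.mpr le_top)
  have hpointwise : ∀ x ∈ Ω,
      √(p * q) * (‖x‖ ^ ((a + b) / 2) * v x ^ ((p - 1) / 2) * u x ^ ((q - 1) / 2) * φ x ^ 2) ≤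
        (-lap ζ x / ζ x * φ x ^ 2 + -lap η x / η x * φ x ^ 2) / 2 := fun x hx => by
    rw [heqζ x hx, heqη x hx]
    linear_combination (φ x ^ 2) * sqrt_mul_mul_rpow_le_half_add hp hq ha hb (norm_nonneg x)
      (hvpos x hx).le (hupos x hx).le (hζpos x hx) (hηpos x hx)
  have hnonneg : ∀ x ∈ Ω, 0 ≤
      √(p * q) * (‖x‖ ^ ((a + b) / 2) * v x ^ ((p - 1) / 2) * u x ^ ((q - 1) / 2) * φ x ^ 2) :=
    fun x hx => by have := hvpos x hx; have := hupos x hx; positivity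
  have hζint := integrable_neg_lap_div_mul_sq hΩ hζ2 hζpos hφ.continuous hφs hφΩ
  have hηint := integrable_neg_lap_div_mul_sq hΩ hη2 hηpos hφ.continuous hφs hφΩ
  rw [← integral_const_mul]
  calc _ ≤ ∫ x in Ω, (-lap ζ x / ζ x * φ x ^ 2 + -lap η x / η x * φ x ^ 2) / 2 :=
        integral_mono_of_nonneg (ae_restrict_of_forall_mem hΩ.measurableSet hnonneg)
          ((hζint.add hηint).div_const 2).restrict
          (ae_restrict_of_forall_mem hΩ.measurableSet hpointwise)
    _ = ((∫ x in Ω, -lap ζ x / ζ x * φ x ^ 2) + ∫ x in Ω, -lap η x / η x * φ x ^ 2) / 2 := by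
        rw [integral_div, integral_add hζint.restrict hηint.restrict]
    _ ≤ ∫ x in Ω, ‖gradient φ x‖ ^ 2 := by
        linarith [integral_neg_lap_div_mul_sq_le hΩ hζ2 hζpos hφ hφs hφΩ,
          integral_neg_lap_div_mul_sq_le hΩ hη2 hηpos hφ hφs hφΩ]

/-- **Stability inequality for the Hénon–Lane–Emden system.**
Let `p, q, a, b ≥ 0` with `pq > 1`, let `Ω ⊆ ℝ^N` be open, and let `(u, v)` be a positive
pointwise stable solution of `-Δu = |x|^a v^p`, `-Δv = |x|^b u^q` in `Ω` (i.e. there exist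
positive smooth `ζ, η` with `-Δζ = p|x|^a v^(p-1) η` and `-Δη = q|x|^b u^(q-1) ζ` in `Ω`).
Then for every `φ ∈ C_c¹(Ω)`,
`√(pq) ∫_Ω |x|^((a+b)/2) v^((p-1)/2) u^((q-1)/2) φ² ≤ ∫_Ω |∇φ|²`. -/
theorem henon_lane_emden_stability_inequality
    (N : ℕ) (p q a b : ℝ) (hp : 0 ≤ p) (hq : 0 ≤ q) (ha : 0 ≤ a) (hb : 0 ≤ b)
    (hpq : 1 < p * q)
    (Ω : Set (EuclideanSpace ℝ (Fin N))) (hΩ : IsOpen Ω)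
    (u v : EuclideanSpace ℝ (Fin N) → ℝ)
    (hu : ContDiffOn ℝ 2 u Ω) (hv : ContDiffOn ℝ 2 v Ω)
    (hupos : ∀ x ∈ Ω, 0 < u x) (hvpos : ∀ x ∈ Ω, 0 < v x)
    (hequ : ∀ x ∈ Ω, -lap u x = ‖x‖ ^ a * v x ^ p)
    (heqv : ∀ x ∈ Ω, -lap v x = ‖x‖ ^ b * u x ^ q)
    (ζ η : EuclideanSpace ℝ (Fin N) → ℝ)
    (hζ : ContDiffOn ℝ (⊤ : ℕ∞) ζ Ω) (hη : ContDiffOn ℝ (⊤ : ℕ∞) η Ω)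
    (hζpos : ∀ x ∈ Ω, 0 < ζ x) (hηpos : ∀ x ∈ Ω, 0 < η x)
    (heqζ : ∀ x ∈ Ω, -lap ζ x = p * (‖x‖ ^ a * v x ^ (p - 1)) * η x)
    (heqη : ∀ x ∈ Ω, -lap η x = q * (‖x‖ ^ b * u x ^ (q - 1)) * ζ x) :
    ∀ φ : EuclideanSpace ℝ (Fin N) → ℝ,
      ContDiff ℝ 1 φ → HasCompactSupport φ → tsupport φ ⊆ Ω →
      Real.sqrt (p * q) *
          (∫ x in Ω, ‖x‖ ^ ((a + b) / 2) * v x ^ ((p - 1) / 2) * u x ^ ((q - 1) / 2) *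
            φ x ^ 2) ≤
        ∫ x in Ω, ‖gradient φ x‖ ^ 2 :=
  henon_lane_emden_stability_inequality_general N p q a b hp hq ha hb Ω hΩ u v hupos hvpos ζ η hζ hη
    hζpos hηpos heqζ heqη
end
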